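/- arXiv:2212.12959 — 9 statements merged into one kernel-verified Lean document; each statement's English description precedes it below -/
import Mathlib

section
/- The number of n-th roots of unity ζ satisfying both ζ^a = -1 and ζ^b = -1 equals gcd(n, a, b) if v₂(a) = v₂(b) < v₂(n), and equals 0 otherwise. -/
/-!
If `ζ ^ c = -1` then the order of `ζ` divides `2c` but not `c`, so `v₂ (orderOf ζ) = v₂ c + 1`.
Hence the two conditions `ζ ^ a = ζ ^ b = -1` together with `orderOf ζ ∣ n` force
`v₂ a = v₂ b < v₂ n`. Conversely, under this condition a primitive `2 ^ (v₂ a + 1)`-th root of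
unity `ζ₀` is a solution, and the solutions are exactly the products of `ζ₀` with the common
roots of unity of orders `n`, `a` and `b`, i.e. with the `gcd (n, a, b)`-th roots of unity.
-/

open Polynomial

lemma padicValNat_two_eq_succ_of_dvd_two_mul {d c : ℕ} (hc : c ≠ 0) (hd : d ∣ 2 * c)
    (hnd : ¬ d ∣ c) : padicValNat 2 d = padicValNat 2 c + 1 := by
  obtain ⟨m, hm⟩ := hd
  have hm_odd : ¬ 2 ∣ m := by
    rintro ⟨m', rfl⟩
    exact hnd ⟨m', by linarith⟩
  have hd0 : d ≠ 0 := by rintro rfl; omega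
  have hm0 : m ≠ 0 := by rintro rfl; omega
  have key := congrArg (padicValNat 2) hm
  rw [padicValNat.mul two_ne_zero hc, padicValNat.mul hd0 hm0, padicValNat.self one_lt_two,
    padicValNat.eq_zero_of_not_dvd hm_odd] at key
  omega

lemma padicValNat_two_orderOf_of_pow_eq_neg_one {M : Type*} [Monoid M] [HasDistribNeg M]
    (hM : (-1 : M) ≠ 1) {x : M} {c : ℕ} (hc : c ≠ 0) (hx : x ^ c = -1) :
    padicValNat 2 (orderOf x) = padicValNat 2 c + 1 := by
  refine padicValNat_two_eq_succ_of_dvd_two_mul hc (orderOf_dvd_of_pow_eq_one ?_) ?_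
  · rw [pow_mul', hx, neg_one_sq]
  · rw [orderOf_dvd_iff_pow_eq_one, hx]
    exact hM

lemma exists_eq_two_pow_padicValNat_mul_not_two_dvd {c : ℕ} (hc : c ≠ 0) :
    ∃ m, c = 2 ^ padicValNat 2 c * m ∧ ¬ 2 ∣ m := by
  obtain ⟨m, hm⟩ := pow_padicValNat_dvd (p := 2) (n := c)
  refine ⟨m, hm, ?_⟩
  rintro ⟨m', rfl⟩
  exact pow_succ_padicValNat_not_dvd (p := 2) hc ⟨m', by rw [pow_succ, mul_assoc]; exact hm⟩

namespace IsPrimitiveRoot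

variable {R : Type*} [CommRing R] [IsDomain R]

lemma pow_eq_neg_one_of_padicValNat_eq {ω : R} {s c : ℕ} (hω : IsPrimitiveRoot ω (2 ^ (s + 1)))
    (hc : c ≠ 0) (hcs : padicValNat 2 c = s) : ω ^ c = -1 := by
  have hhalf : ω ^ 2 ^ s = -1 := by
    have h2 := hω.pow_of_dvd (by positivity) (pow_dvd_pow 2 s.le_succ)
    rw [pow_succ, Nat.mul_div_cancel_left _ (by positivity)] at h2
    exact h2.eq_neg_one_of_two_right
  obtain ⟨m, hm, hm_odd⟩ := exists_eq_two_pow_padicValNat_mul_not_two_dvd hc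
  rw [hm, hcs, pow_mul, hhalf, Odd.neg_one_pow (Nat.odd_iff.mpr (Nat.two_dvd_ne_zero.mp hm_odd))]

lemma ncard_setOf_pow_eq_one {ζ : R} {g : ℕ} (hζ : IsPrimitiveRoot ζ g) (hg : 0 < g) :
    {w : R | w ^ g = 1}.ncard = g := by
  have hroots : {w : R | w ^ g = 1} = nthRootsFinset g (1 : R) := by
    ext w
    simp [Polynomial.mem_nthRootsFinset hg]
  rw [hroots, Set.ncard_coe_finset, hζ.card_nthRootsFinset]

end IsPrimitiveRoot

lemma setOf_pow_eq_neg_one_eq_image_mul {K : Type*} [Field K] {ζ₀ : K} (hζ₀ : ζ₀ ≠ 0) {n a b : ℕ} (hn : ζ₀ ^ n = 1)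
    (ha : ζ₀ ^ a = -1) (hb : ζ₀ ^ b = -1) :
    {ζ : K | ζ ^ n = 1 ∧ ζ ^ a = -1 ∧ ζ ^ b = -1} =
      (ζ₀ * ·) '' {w : K | w ^ Nat.gcd n (Nat.gcd a b) = 1} := by
  have hshift : ∀ {w : K} {k : ℕ} {u : K}, ζ₀ ^ k = u → ((ζ₀ * w) ^ k = u ↔ w ^ k = 1) := by
    rintro w k u rfl
    rw [mul_pow, mul_eq_left₀ (pow_ne_zero k hζ₀)]
  ext ζ
  obtain ⟨w, rfl⟩ : ∃ w, ζ = ζ₀ * w := ⟨ζ₀⁻¹ * ζ, by field_simp⟩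
  simp only [Set.mem_ofPred_eq, Set.mem_image, mul_right_inj' hζ₀, exists_eq_right, pow_gcd_eq_one]
  rw [hshift hn, hshift ha, hshift hb]

lemma padicValNat_two_eq_of_pow_eq_neg_one {M : Type*} [Monoid M] [HasDistribNeg M]
    (hM : (-1 : M) ≠ 1) {ζ : M} {n a b : ℕ} (hn : 0 < n) (ha : 0 < a) (hb : 0 < b)
    (hζn : ζ ^ n = 1) (hζa : ζ ^ a = -1) (hζb : ζ ^ b = -1) :
    padicValNat 2 a = padicValNat 2 b ∧ padicValNat 2 a < padicValNat 2 n := by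
  have hva := padicValNat_two_orderOf_of_pow_eq_neg_one hM ha.ne' hζa
  have hvb := padicValNat_two_orderOf_of_pow_eq_neg_one hM hb.ne' hζb
  have hvn : padicValNat 2 (orderOf ζ) ≤ padicValNat 2 n :=
    (padicValNat_dvd_iff_le hn.ne').mp
      ((pow_padicValNat_dvd (p := 2)).trans (orderOf_dvd_of_pow_eq_one hζn))
  omega

theorem stmt_6 (n a b : ℕ) (hn : 0 < n) (ha : 0 < a) (hb : 0 < b) :
    {ζ : ℂ | ζ ^ n = 1 ∧ ζ ^ a = -1 ∧ ζ ^ b = -1}.ncard =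
      if padicValNat 2 a = padicValNat 2 b ∧ padicValNat 2 a < padicValNat 2 n
      then Nat.gcd n (Nat.gcd a b) else 0 := by
  split_ifs with hcond
  · obtain ⟨hab, han⟩ := hcond
    have hg : 0 < Nat.gcd n (Nat.gcd a b) := Nat.gcd_pos_of_pos_left _ hn
    obtain ⟨ω, hω⟩ : ∃ ω : ℂ, IsPrimitiveRoot ω (2 ^ (padicValNat 2 a + 1)) :=
      ⟨_, Complex.isPrimitiveRoot_exp (2 ^ (padicValNat 2 a + 1)) (by positivity)⟩
    have hωn : ω ^ n = 1 :=
      (hω.pow_eq_one_iff_dvd n).mpr ((padicValNat_dvd_iff_le hn.ne').mpr han)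
    have hω0 : ω ≠ 0 := hω.ne_zero (pow_ne_zero _ two_ne_zero)
    rw [setOf_pow_eq_neg_one_eq_image_mul hω0 hωn (hω.pow_eq_neg_one_of_padicValNat_eq ha.ne' rfl)
        (hω.pow_eq_neg_one_of_padicValNat_eq hb.ne' hab.symm),
      Set.ncard_image_of_injective _ (mul_right_injective₀ hω0),
      (Complex.isPrimitiveRoot_exp _ hg.ne').ncard_setOf_pow_eq_one hg]
  · convert Set.ncard_empty ℂ
    exact Set.eq_empty_of_forall_notMem fun ζ ⟨hζn, hζa, hζb⟩ =>
      hcond (padicValNat_two_eq_of_pow_eq_neg_one (by norm_num) hn ha hb hζn hζa hζb)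
end

section
/- For the polynomial P(x) = x^p + x^q + x^{n-q} + x^{n-p} with 1 ≤ p < q < n/2, and any n-th root of unity ζ, one has P(ζ) = 0 if and only if ζ^{p+q} = -1 or ζ^{q-p} = -1. -/
theorem stmt_7 (n p q : ℕ) (hn : 5 ≤ n) (hp : 1 ≤ p) (hpq : p < q) (hq : 2 * q < n)
    (ζ : ℂ) (hζ : ζ ^ n = 1) :
    ζ ^ p + ζ ^ q + ζ ^ (n - q) + ζ ^ (n - p) = 0 ↔
      ζ ^ (p + q) = -1 ∨ ζ ^ (q - p) = -1 := by
  have hz : ζ ≠ 0 := by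
    intro h
    rw [h, zero_pow (by omega : n ≠ 0)] at hζ
    exact zero_ne_one hζ
  have e1 : ζ ^ q * ζ ^ (n - q) = 1 := by
    rw [← pow_add, show q + (n - q) = n by omega, hζ]
  have e2 : ζ ^ q * ζ ^ (n - p) = ζ ^ (q - p) := by
    rw [← pow_add, show q + (n - p) = (q - p) + n by omega, pow_add, hζ, mul_one]
  have h1 : ζ ^ q * ζ ^ p = ζ ^ (p + q) := by rw [← pow_add, Nat.add_comm]
  have h2 : ζ ^ (p + q) * ζ ^ (q - p) = ζ ^ q * ζ ^ q := by
    rw [← pow_add, ← pow_add, show p + q + (q - p) = q + q by omega]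
  have main : (ζ ^ (p + q) + 1) * (ζ ^ (q - p) + 1)
      = ζ ^ q * (ζ ^ p + ζ ^ q + ζ ^ (n - q) + ζ ^ (n - p)) := by
    have expand : (ζ ^ (p + q) + 1) * (ζ ^ (q - p) + 1)
        = ζ ^ (p + q) * ζ ^ (q - p) + ζ ^ (p + q) + ζ ^ (q - p) + 1 := by ring
    rw [expand, h2, ← h1, ← e1, ← e2]; ring
  constructor
  · intro h
    have : (ζ ^ (p + q) + 1) * (ζ ^ (q - p) + 1) = 0 := by rw [main, h, mul_zero]
    rcases mul_eq_zero.mp this with h' | h'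
    · exact Or.inl (by linear_combination h')
    · exact Or.inr (by linear_combination h')
  · intro h
    have hprod : (ζ ^ (p + q) + 1) * (ζ ^ (q - p) + 1) = 0 := by
      rcases h with h' | h'
      · rw [h']; ring
      · rw [h']; ring
    rw [main] at hprod
    rcases mul_eq_zero.mp hprod with h' | h'
    · exact absurd h' (pow_ne_zero q hz)
    · exact h'
end

section
/- If n is odd, then no n-th root of unity ζ satisfies ζ^m = -1 for any positive integer m; hence the polynomial x^p + x^q + x^{n-q} + x^{n-p} has no root among the n-th roots of unity when 1 ≤ p < q < n/2. -/
theorem stmt_9 (n p q : ℕ) (hodd : Odd n) (hn : 5 ≤ n)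
    (hp : 1 ≤ p) (hpq : p < q) (hq : 2 * q < n) :
    (∀ ζ : ℂ, ζ ^ n = 1 → ∀ m : ℕ, 0 < m → ζ ^ m ≠ -1) ∧
    (∀ ζ : ℂ, ζ ^ n = 1 → ζ ^ p + ζ ^ q + ζ ^ (n - q) + ζ ^ (n - p) ≠ 0) := by
  have h1 : ∀ ζ : ℂ, ζ ^ n = 1 → ∀ m : ℕ, 0 < m → ζ ^ m ≠ -1 := by
    intro ζ hζ m hm hneg
    have h2 : (ζ ^ m) ^ n = (-1 : ℂ) ^ n := by rw [hneg]
    rw [← pow_mul, mul_comm, pow_mul, hζ, one_pow, hodd.neg_one_pow] at h2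
    norm_num at h2
  refine ⟨h1, ?_⟩
  intro ζ hζ h
  have hn0 : n ≠ 0 := by omega
  have hζ0 : ζ ≠ 0 := by
    intro h0
    rw [h0, zero_pow hn0] at hζ
    exact zero_ne_one hζ
  have e1 : ζ ^ p * ζ ^ (q - p) = ζ ^ q := by rw [← pow_add]; congr 1; omega
  have e2 : ζ ^ p * ζ ^ (n - p - q) = ζ ^ (n - q) := by rw [← pow_add]; congr 1; omega
  have e3 : ζ ^ p * (ζ ^ (q - p) * ζ ^ (n - p - q)) = ζ ^ (n - p) := by
    rw [← pow_add, ← pow_add]; congr 1; omega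
  have key : ζ ^ p * ((1 + ζ ^ (q - p)) * (1 + ζ ^ (n - p - q))) = 0 := by
    have hexp : ζ ^ p * ((1 + ζ ^ (q - p)) * (1 + ζ ^ (n - p - q)))
        = ζ ^ p + ζ ^ q + ζ ^ (n - q) + ζ ^ (n - p) := by
      rw [← e1, ← e2, ← e3]; ring
    rw [hexp, h]
  rcases mul_eq_zero.1 key with h0 | h0
  · exact hζ0 (pow_eq_zero_iff (by omega : p ≠ 0) |>.1 h0)
  rcases mul_eq_zero.1 h0 with h2 | h2
  · exact h1 ζ hζ (q - p) (by omega) (by linear_combination h2)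
  · exact h1 ζ hζ (n - p - q) (by omega) (by linear_combination h2)
end

section
/- Let n ≥ 5, 1 ≤ p < q < n/2. The number of n-th roots of unity ζ with ζ^{p+q} = -1 or ζ^{q-p} = -1 equals: 0 if v₂(p+q) ≥ v₂(n) and v₂(q-p) ≥ v₂(n); gcd(n,p+q) if v₂(p+q) < v₂(n) ≤ v₂(q-p); gcd(n,q-p) if v₂(q-p) < v₂(n) ≤ v₂(p+q); gcd(n,p+q) + gcd(n,q-p) if v₂(p+q), v₂(q-p) < v₂(n) and v₂(p+q) ≠ v₂(q-p); and gcd(n,p+q) + gcd(n,q-p) − gcd(n,p+q,q-p) if v₂(p+q) = v₂(q-p) < v₂(n). -/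
/-!
If `ζ ^ a = ±1` and `ζ ^ b = -1`, then `ζ ^ (2 * gcd a b) = 1` while `ζ ^ gcd a b ≠ 1`, so
`ζ ^ gcd a b = -1` and `ζ ^ a = (-1) ^ (a / gcd a b)`. Since `a / gcd a b` is odd exactly when
`v₂ a ≤ v₂ b`, the `n`-th roots of unity with `ζ ^ m = -1` are all `gcd n m` roots of
`X ^ gcd n m + 1` when `v₂ m < v₂ n`, and there are none otherwise; the roots with
`ζ ^ a = ζ ^ b = -1` are those with `ζ ^ gcd a b = -1` when `v₂ a = v₂ b`, and there are none
otherwise. Inclusion–exclusion gives the count.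
-/

open Finset Polynomial

lemma padicValNat_gcd {p a b : ℕ} [Fact p.Prime] (ha : a ≠ 0) (hb : b ≠ 0) :
    padicValNat p (Nat.gcd a b) = min (padicValNat p a) (padicValNat p b) := by
  have h := congrArg (· p) (Nat.factorization_gcd ha hb)
  simpa only [Finsupp.inf_apply, Nat.factorization_def _ Fact.out] using h

lemma odd_div_iff_padicValNat_le {a d : ℕ} (ha : a ≠ 0) (hd : d ∣ a) :
    Odd (a / d) ↔ padicValNat 2 a ≤ padicValNat 2 d := by
  obtain ⟨k, rfl⟩ := hd
  obtain ⟨hd0, hk0⟩ := mul_ne_zero_iff.mp ha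
  rw [Nat.mul_div_cancel_left k (Nat.pos_of_ne_zero hd0), padicValNat.mul hd0 hk0,
    ← Nat.not_even_iff_odd, even_iff_two_dvd, dvd_iff_padicValNat_ne_zero hk0]
  omega

lemma odd_div_gcd_left_iff {a b : ℕ} (ha : a ≠ 0) (hb : b ≠ 0) :
    Odd (a / Nat.gcd a b) ↔ padicValNat 2 a ≤ padicValNat 2 b := by
  rw [odd_div_iff_padicValNat_le ha (Nat.gcd_dvd_left a b), padicValNat_gcd ha hb]
  omega

lemma odd_div_gcd_right_iff {a b : ℕ} (ha : a ≠ 0) (hb : b ≠ 0) :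
    Odd (b / Nat.gcd a b) ↔ padicValNat 2 b ≤ padicValNat 2 a := by
  rw [Nat.gcd_comm, odd_div_gcd_left_iff hb ha]

section SignedPowers

variable {R : Type*} [Ring R] {ζ : R} {a b d : ℕ}

lemma pow_eq_neg_one_pow_div (hd : d ∣ a) (hζ : ζ ^ d = -1) : ζ ^ a = (-1) ^ (a / d) := by
  conv_lhs => rw [← Nat.mul_div_cancel' hd]
  rw [pow_mul, hζ]

lemma pow_eq_one_iff_even_div (hR : (-1 : R) ≠ 1) (hd : d ∣ a) (hζ : ζ ^ d = -1) :
    ζ ^ a = 1 ↔ Even (a / d) := by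
  rw [pow_eq_neg_one_pow_div hd hζ, neg_one_pow_eq_one_iff_even hR]

lemma pow_eq_neg_one_iff_odd_div (hR : (-1 : R) ≠ 1) (hd : d ∣ a) (hζ : ζ ^ d = -1) :
    ζ ^ a = -1 ↔ Odd (a / d) := by
  rw [pow_eq_neg_one_pow_div hd hζ, neg_one_pow_eq_neg_one_iff_odd hR]

lemma pow_gcd_eq_neg_one [NoZeroDivisors R] (hR : (-1 : R) ≠ 1) (ha : ζ ^ (2 * a) = 1)
    (hb : ζ ^ b = -1) : ζ ^ Nat.gcd a b = -1 := by
  have hb2 : ζ ^ (2 * b) = 1 := by rw [pow_mul', hb, neg_one_sq]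
  have hsq : (ζ ^ Nat.gcd a b) ^ 2 = 1 := by
    rw [← pow_mul', ← Nat.gcd_mul_left]
    exact pow_gcd_eq_one.mpr ⟨ha, hb2⟩
  refine (sq_eq_one_iff.mp hsq).resolve_left fun h1 => hR ?_
  calc (-1 : R) = ζ ^ b := hb.symm
    _ = (ζ ^ Nat.gcd a b) ^ (b / Nat.gcd a b) := by
      rw [← pow_mul, Nat.mul_div_cancel' (Nat.gcd_dvd_right a b)]
    _ = 1 := by rw [h1, one_pow]

lemma pow_eq_one_and_pow_eq_neg_one_iff [NoZeroDivisors R] (hR : (-1 : R) ≠ 1) :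
    ζ ^ a = 1 ∧ ζ ^ b = -1 ↔
      ζ ^ Nat.gcd a b = -1 ∧ Even (a / Nat.gcd a b) ∧ Odd (b / Nat.gcd a b) := by
  refine ⟨fun ⟨ha, hb⟩ => ?_, fun ⟨hg, ha, hb⟩ =>
    ⟨(pow_eq_one_iff_even_div hR (Nat.gcd_dvd_left a b) hg).mpr ha,
      (pow_eq_neg_one_iff_odd_div hR (Nat.gcd_dvd_right a b) hg).mpr hb⟩⟩
  have hg := pow_gcd_eq_neg_one hR (by rw [pow_mul', ha, one_pow]) hb
  exact ⟨hg, (pow_eq_one_iff_even_div hR (Nat.gcd_dvd_left a b) hg).mp ha,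
    (pow_eq_neg_one_iff_odd_div hR (Nat.gcd_dvd_right a b) hg).mp hb⟩

lemma pow_eq_neg_one_and_pow_eq_neg_one_iff [NoZeroDivisors R] (hR : (-1 : R) ≠ 1) :
    ζ ^ a = -1 ∧ ζ ^ b = -1 ↔
      ζ ^ Nat.gcd a b = -1 ∧ Odd (a / Nat.gcd a b) ∧ Odd (b / Nat.gcd a b) := by
  refine ⟨fun ⟨ha, hb⟩ => ?_, fun ⟨hg, ha, hb⟩ =>
    ⟨(pow_eq_neg_one_iff_odd_div hR (Nat.gcd_dvd_left a b) hg).mpr ha,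
      (pow_eq_neg_one_iff_odd_div hR (Nat.gcd_dvd_right a b) hg).mpr hb⟩⟩
  have hg := pow_gcd_eq_neg_one hR (by rw [pow_mul', ha, neg_one_sq]) hb
  exact ⟨hg, (pow_eq_neg_one_iff_odd_div hR (Nat.gcd_dvd_left a b) hg).mp ha,
    (pow_eq_neg_one_iff_odd_div hR (Nat.gcd_dvd_right a b) hg).mp hb⟩

end SignedPowers

section ComplexRoots

lemma Complex.card_nthRootsFinset {n : ℕ} (hn : n ≠ 0) {a : ℂ} (ha : a ≠ 0) :
    #(nthRootsFinset n a) = n := by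
  classical
  have hω := isPrimitiveRoot_exp n hn
  rw [nthRootsFinset_def, Multiset.toFinset_card_of_nodup (hω.nthRoots_nodup ha),
    hω.card_nthRoots, if_pos (IsAlgClosed.exists_pow_nat_eq a (Nat.pos_of_ne_zero hn))]

variable {n m : ℕ}

lemma filter_nthRootsFinset_pow_eq_neg_one (hn : n ≠ 0) (hm : m ≠ 0) :
    {ζ ∈ nthRootsFinset n (1 : ℂ) | ζ ^ m = -1} =
      if padicValNat 2 m < padicValNat 2 n then nthRootsFinset (Nat.gcd n m) (-1) else ∅ := by
  have hR : (-1 : ℂ) ≠ 1 := by norm_num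
  ext ζ
  rw [mem_filter, mem_nthRootsFinset (Nat.pos_of_ne_zero hn),
    pow_eq_one_and_pow_eq_neg_one_iff hR, ← Nat.not_odd_iff_even, odd_div_gcd_left_iff hn hm,
    odd_div_gcd_right_iff hn hm]
  split_ifs with h
  · rw [mem_nthRootsFinset (Nat.gcd_pos_of_pos_left m (Nat.pos_of_ne_zero hn))]
    exact ⟨And.left, fun hζ => ⟨hζ, by omega, h.le⟩⟩
  · simp only [notMem_empty, iff_false]
    omega

lemma card_filter_nthRootsFinset_pow_eq_neg_one (hn : n ≠ 0) (hm : m ≠ 0) :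
    #{ζ ∈ nthRootsFinset n (1 : ℂ) | ζ ^ m = -1} =
      if padicValNat 2 m < padicValNat 2 n then Nat.gcd n m else 0 := by
  rw [filter_nthRootsFinset_pow_eq_neg_one hn hm]
  split_ifs
  · exact Complex.card_nthRootsFinset (Nat.gcd_ne_zero_left hn) (by norm_num)
  · rfl

lemma filter_nthRootsFinset_pow_eq_neg_one_inter {a b : ℕ} (ha : a ≠ 0) (hb : b ≠ 0) :
    {ζ ∈ nthRootsFinset n (1 : ℂ) | ζ ^ a = -1} ∩ {ζ ∈ nthRootsFinset n (1 : ℂ) | ζ ^ b = -1} =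
      if padicValNat 2 a = padicValNat 2 b then
        {ζ ∈ nthRootsFinset n (1 : ℂ) | ζ ^ Nat.gcd a b = -1} else ∅ := by
  have hR : (-1 : ℂ) ≠ 1 := by norm_num
  ext ζ
  rw [← filter_and, mem_filter, pow_eq_neg_one_and_pow_eq_neg_one_iff hR,
    odd_div_gcd_left_iff ha hb, odd_div_gcd_right_iff ha hb]
  split_ifs with h
  · rw [mem_filter]
    exact ⟨fun ⟨hζ, hg, _⟩ => ⟨hζ, hg⟩, fun ⟨hζ, hg⟩ => ⟨hζ, hg, h.le, h.ge⟩⟩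
  · simp only [notMem_empty, iff_false]
    omega

end ComplexRoots

theorem stmt_10_general (n p q : ℕ) (hpq : p < q) (hq : 2 * q < n) :
    let N := {ζ : ℂ | ζ ^ n = 1 ∧ (ζ ^ (p + q) = -1 ∨ ζ ^ (q - p) = -1)}.ncard
    let v1 := padicValNat 2 (p + q)
    let v2 := padicValNat 2 (q - p)
    let v3 := padicValNat 2 n
    (v3 ≤ v1 ∧ v3 ≤ v2 → N = 0) ∧
    (v1 < v3 ∧ v3 ≤ v2 → N = Nat.gcd n (p + q)) ∧
    (v3 ≤ v1 ∧ v2 < v3 → N = Nat.gcd n (q - p)) ∧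
    (v1 < v3 ∧ v2 < v3 ∧ v1 ≠ v2 → N = Nat.gcd n (p + q) + Nat.gcd n (q - p)) ∧
    (v1 < v3 ∧ v2 < v3 ∧ v1 = v2 →
      N = Nat.gcd n (p + q) + Nat.gcd n (q - p) - Nat.gcd n (Nat.gcd (p + q) (q - p))) := by
  intro N v1 v2 v3
  have hn : n ≠ 0 := by omega
  have ha : p + q ≠ 0 := by omega
  have hb : q - p ≠ 0 := by omega
  have hN : N = #({ζ ∈ nthRootsFinset n (1 : ℂ) | ζ ^ (p + q) = -1} ∪
      {ζ ∈ nthRootsFinset n (1 : ℂ) | ζ ^ (q - p) = -1}) := by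
    rw [← Set.ncard_coe_finset]
    show Set.ncard _ = _
    congr 1
    ext ζ
    simp only [Set.mem_ofPred_eq, coe_union, coe_filter, Set.mem_union, and_or_left,
      mem_nthRootsFinset (Nat.pos_of_ne_zero hn)]
  rw [card_union, filter_nthRootsFinset_pow_eq_neg_one_inter ha hb, apply_ite Finset.card,
    card_filter_nthRootsFinset_pow_eq_neg_one hn ha,
    card_filter_nthRootsFinset_pow_eq_neg_one hn hb,
    card_filter_nthRootsFinset_pow_eq_neg_one hn (Nat.gcd_ne_zero_left ha),
    padicValNat_gcd ha hb, card_empty] at hN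
  refine ⟨?_, ?_, ?_, ?_, ?_⟩ <;> intro h <;> rw [hN] <;> split_ifs <;> omega

theorem stmt_10 (n p q : ℕ) (hn : 5 ≤ n) (hp : 1 ≤ p) (hpq : p < q) (hq : 2 * q < n) :
    let N := {ζ : ℂ | ζ ^ n = 1 ∧ (ζ ^ (p + q) = -1 ∨ ζ ^ (q - p) = -1)}.ncard
    let v1 := padicValNat 2 (p + q)
    let v2 := padicValNat 2 (q - p)
    let v3 := padicValNat 2 n
    (v3 ≤ v1 ∧ v3 ≤ v2 → N = 0) ∧
    (v1 < v3 ∧ v3 ≤ v2 → N = Nat.gcd n (p + q)) ∧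
    (v3 ≤ v1 ∧ v2 < v3 → N = Nat.gcd n (q - p)) ∧
    (v1 < v3 ∧ v2 < v3 ∧ v1 ≠ v2 → N = Nat.gcd n (p + q) + Nat.gcd n (q - p)) ∧
    (v1 < v3 ∧ v2 < v3 ∧ v1 = v2 →
      N = Nat.gcd n (p + q) + Nat.gcd n (q - p) - Nat.gcd n (Nat.gcd (p + q) (q - p))) :=
  stmt_10_general n p q hpq hq
end

section
/- Let n ≥ 5 and 1 ≤ p < q < n/2. There exists an n-th root of unity ζ with ζ^{p+q} = -1 or ζ^{q-p} = -1 (i.e., the quartic circulant graph Circ(n,{p,q}) is singular) if and only if v₂(p+q) < v₂(n) or v₂(q-p) < v₂(n). -/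
/-! If `ζ ^ n = 1` and `ζ ^ m = -1`, the order `d` of `ζ` divides `n` and `2 * m` but not `m`,
which forces `v₂ m < v₂ d ≤ v₂ n`. Conversely, if `v₂ m < v₂ n`, a primitive `2 ^ (v₂ m + 1)`-th
root of unity `ζ` has `ζ ^ n = 1` and `ζ ^ m = (ζ ^ 2 ^ v₂ m) ^ odd = -1`. -/

theorem padicValNat_two_pow_mul_odd {a k : ℕ} (hk : Odd k) : padicValNat 2 (2 ^ a * k) = a := by
  rw [padicValNat.mul (by positivity) hk.pos.ne', padicValNat.prime_pow,
    padicValNat.eq_zero_of_not_dvd hk.not_two_dvd_nat, add_zero]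

theorem Nat.dvd_of_dvd_two_mul_of_padicValNat_le {d m : ℕ} (hm : m ≠ 0) (hdm : d ∣ 2 * m)
    (hv : padicValNat 2 d ≤ padicValNat 2 m) : d ∣ m := by
  have hd : d ≠ 0 := by rintro rfl; simp_all
  obtain ⟨e, u, hu, rfl⟩ := Nat.exists_eq_two_pow_mul_odd hd
  have hcop : Nat.Coprime 2 u := Nat.coprime_two_left.mpr hu
  refine (hcop.pow_left e).mul_dvd_of_dvd_of_dvd ?_ ?_
  · rw [padicValNat_two_pow_mul_odd hu] at hv
    exact (pow_dvd_pow 2 hv).trans pow_padicValNat_dvd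
  · exact hcop.symm.dvd_of_dvd_mul_left ((dvd_mul_left u _).trans hdm)

theorem padicValNat_lt_of_pow_eq_one_of_pow_eq_neg_one {R : Type*} [Ring R]
    (hR : (-1 : R) ≠ 1) {ζ : R} {n m : ℕ} (hn : n ≠ 0) (hm : m ≠ 0) (h1 : ζ ^ n = 1)
    (h2 : ζ ^ m = -1) : padicValNat 2 m < padicValNat 2 n := by
  have hdn : orderOf ζ ∣ n := orderOf_dvd_of_pow_eq_one h1
  have hd2m : orderOf ζ ∣ 2 * m := orderOf_dvd_of_pow_eq_one (by rw [mul_comm, pow_mul, h2]; simp)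
  have hdm : ¬ orderOf ζ ∣ m := fun h => hR (h2 ▸ orderOf_dvd_iff_pow_eq_one.mp h)
  calc padicValNat 2 m < padicValNat 2 (orderOf ζ) :=
        lt_of_not_ge fun hv => hdm (Nat.dvd_of_dvd_two_mul_of_padicValNat_le hm hd2m hv)
    _ ≤ padicValNat 2 n :=
        (padicValNat_dvd_iff_le hn).mp (pow_padicValNat_dvd.trans hdn)

theorem IsPrimitiveRoot.pow_two_pow_mul_odd_eq_neg_one {R : Type*} [CommRing R] [NoZeroDivisors R]
    {ζ : R} {a k : ℕ} (hζ : IsPrimitiveRoot ζ (2 ^ (a + 1))) (hk : Odd k) :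
    ζ ^ (2 ^ a * k) = -1 := by
  have h2 : IsPrimitiveRoot (ζ ^ 2 ^ a) 2 := by
    simpa [pow_succ] using hζ.pow_of_dvd (by positivity) (pow_dvd_pow 2 a.le_succ)
  rw [pow_mul, h2.eq_neg_one_of_two_right, hk.neg_one_pow]

theorem Complex.exists_pow_eq_one_and_pow_eq_neg_one_iff {n m : ℕ} (hn : n ≠ 0) (hm : m ≠ 0) :
    (∃ ζ : ℂ, ζ ^ n = 1 ∧ ζ ^ m = -1) ↔ padicValNat 2 m < padicValNat 2 n := by
  refine ⟨fun ⟨ζ, h1, h2⟩ =>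
    padicValNat_lt_of_pow_eq_one_of_pow_eq_neg_one (by norm_num) hn hm h1 h2, fun h => ?_⟩
  obtain ⟨a, k, hk, rfl⟩ := Nat.exists_eq_two_pow_mul_odd hm
  rw [padicValNat_two_pow_mul_odd hk] at h
  have hζ := Complex.isPrimitiveRoot_exp (2 ^ (a + 1)) (by positivity)
  refine ⟨_, hζ.pow_eq_one_iff_dvd n |>.mpr ?_, hζ.pow_two_pow_mul_odd_eq_neg_one hk⟩
  exact (pow_dvd_pow 2 h).trans pow_padicValNat_dvd

theorem stmt_11_general (n p q : ℕ) (hpq : p < q) (hq : 2 * q < n) :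
    (∃ ζ : ℂ, ζ ^ n = 1 ∧ (ζ ^ (p + q) = -1 ∨ ζ ^ (q - p) = -1)) ↔
      padicValNat 2 (p + q) < padicValNat 2 n ∨
        padicValNat 2 (q - p) < padicValNat 2 n := by
  have hn : n ≠ 0 := by omega
  rw [← Complex.exists_pow_eq_one_and_pow_eq_neg_one_iff hn (by omega : p + q ≠ 0),
    ← Complex.exists_pow_eq_one_and_pow_eq_neg_one_iff hn (by omega : q - p ≠ 0)]
  simp only [and_or_left, exists_or]

theorem stmt_11 (n p q : ℕ) (hn : 5 ≤ n) (hp : 1 ≤ p) (hpq : p < q) (hq : 2 * q < n) :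
    (∃ ζ : ℂ, ζ ^ n = 1 ∧ (ζ ^ (p + q) = -1 ∨ ζ ^ (q - p) = -1)) ↔
      padicValNat 2 (p + q) < padicValNat 2 n ∨
        padicValNat 2 (q - p) < padicValNat 2 n :=
  stmt_11_general n p q hpq hq
end

section
/- Let n ≥ 5 and 1 ≤ p < q < n/2. There is exactly one n-th root of unity ζ with ζ^{p+q} = -1 or ζ^{q-p} = -1 (i.e., Circ(n,{p,q}) is a nut graph) if and only if n is even, p and q have different parities, and gcd(n, p+q) = gcd(n, q-p) = 1. -/
private lemma sq_one_cases {ζ : ℂ} (h : ζ ^ 2 = 1) : ζ = 1 ∨ ζ = -1 := by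
  have h2 : (ζ - 1) * (ζ + 1) = 0 := by linear_combination h
  rcases mul_eq_zero.mp h2 with h3 | h3
  · left; linear_combination h3
  · right; linear_combination h3

private lemma unique_neg_one {n m : ℕ} (hne : Even n) (hm : Odd m)
    (hcop : Nat.gcd n m = 1) {ζ : ℂ} (h1 : ζ ^ n = 1) (h : ζ ^ m = -1) : ζ = -1 := by
  have hord : orderOf ζ ∣ n := orderOf_dvd_of_pow_eq_one h1
  have h2m : ζ ^ (2 * m) = 1 := by
    rw [mul_comm, pow_mul, h]; norm_num
  have hord2 : orderOf ζ ∣ 2 * m := orderOf_dvd_of_pow_eq_one h2m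
  have hdvd : orderOf ζ ∣ Nat.gcd n (2 * m) := Nat.dvd_gcd hord hord2
  have hcop' : Nat.Coprime m n := (Nat.coprime_iff_gcd_eq_one.mpr hcop).symm
  have hg : Nat.gcd n (2 * m) = 2 := by
    have h5 : Nat.gcd n (2 * m) = Nat.gcd n 2 := hcop'.gcd_mul_right_cancel_right 2
    rw [h5, Nat.gcd_comm, Nat.gcd_eq_left hne.two_dvd]
  rw [hg] at hdvd
  have hsq : ζ ^ 2 = 1 := orderOf_dvd_iff_pow_eq_one.mp hdvd
  rcases sq_one_cases hsq with h3 | h3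
  · exfalso
    rw [h3, one_pow] at h
    norm_num at h
  · exact h3

-- for d ≥ 2 dividing n and m, gives an element -ω of the set, with ω ≠ 1
private lemma extra_elem {n m d : ℕ} (hd : 2 ≤ d) (hdn : d ∣ n) (hdm : d ∣ m)
    (hne : Even n) (hm : Odd m) :
    ∃ ω : ℂ, ω ≠ 1 ∧ (-ω) ^ n = 1 ∧ (-ω) ^ m = -1 := by
  have hd0 : d ≠ 0 := by omega
  have hprim := Complex.isPrimitiveRoot_exp d hd0
  refine ⟨_, hprim.ne_one (by omega), ?_, ?_⟩
  · obtain ⟨k, hk⟩ := hdn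
    rw [hne.neg_pow, hk, pow_mul, hprim.pow_eq_one, one_pow]
  · obtain ⟨k, hk⟩ := hdm
    rw [hm.neg_pow, hk, pow_mul, hprim.pow_eq_one, one_pow]

theorem stmt_12 (n p q : ℕ) (hn : 5 ≤ n) (hp : 1 ≤ p) (hpq : p < q) (hq : 2 * q < n) :
    {ζ : ℂ | ζ ^ n = 1 ∧ (ζ ^ (p + q) = -1 ∨ ζ ^ (q - p) = -1)}.ncard = 1 ↔
      Even n ∧ p % 2 ≠ q % 2 ∧ Nat.gcd n (p + q) = 1 ∧ Nat.gcd n (q - p) = 1 := by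
  constructor
  · intro h1
    obtain ⟨ζ₀, hζ₀⟩ := Set.ncard_eq_one.mp h1
    have hmem : ζ₀ ∈ {ζ : ℂ | ζ ^ n = 1 ∧ (ζ ^ (p + q) = -1 ∨ ζ ^ (q - p) = -1)} := by
      rw [hζ₀]; rfl
    obtain ⟨hpow, hor⟩ := hmem
    -- n is even
    have hkey : ((-1 : ℂ)) ^ n = 1 := by
      rcases hor with h | h
      · calc ((-1 : ℂ)) ^ n = (ζ₀ ^ (p + q)) ^ n := by rw [h]
          _ = (ζ₀ ^ n) ^ (p + q) := by rw [← pow_mul, mul_comm, pow_mul]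
          _ = 1 := by rw [hpow, one_pow]
      · calc ((-1 : ℂ)) ^ n = (ζ₀ ^ (q - p)) ^ n := by rw [h]
          _ = (ζ₀ ^ n) ^ (q - p) := by rw [← pow_mul, mul_comm, pow_mul]
          _ = 1 := by rw [hpow, one_pow]
    have hne : Even n := by
      by_contra hodd
      rw [Nat.not_even_iff_odd] at hodd
      rw [hodd.neg_one_pow] at hkey
      norm_num at hkey
    -- parity
    have hpar : p % 2 ≠ q % 2 := by
      by_contra hp2
      have hea : Even (p + q) := Nat.even_iff.mpr (by omega)
      have heb : Even (q - p) := Nat.even_iff.mpr (by omega)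
      have hmem' : -ζ₀ ∈ {ζ : ℂ | ζ ^ n = 1 ∧ (ζ ^ (p + q) = -1 ∨ ζ ^ (q - p) = -1)} := by
        refine ⟨by rw [hne.neg_pow, hpow], ?_⟩
        rcases hor with h | h
        · exact Or.inl (by rw [hea.neg_pow, h])
        · exact Or.inr (by rw [heb.neg_pow, h])
      rw [hζ₀, Set.mem_singleton_iff] at hmem'
      have hz : ζ₀ = 0 := by
        have h6 : (2 : ℂ) * ζ₀ = 0 := by linear_combination -hmem'
        simpa using h6
      rw [hz, zero_pow (by omega)] at hpow
      norm_num at hpow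
    have hoa : Odd (p + q) := Nat.odd_iff.mpr (by omega)
    have hob : Odd (q - p) := Nat.odd_iff.mpr (by omega)
    -- -1 is in S, so ζ₀ = -1
    have hneg : ζ₀ = -1 := by
      have hmem' : (-1 : ℂ) ∈ {ζ : ℂ | ζ ^ n = 1 ∧ (ζ ^ (p + q) = -1 ∨ ζ ^ (q - p) = -1)} :=
        ⟨hne.neg_one_pow, Or.inl hoa.neg_one_pow⟩
      rw [hζ₀, Set.mem_singleton_iff] at hmem'
      exact hmem'.symm
    refine ⟨hne, hpar, ?_, ?_⟩
    · by_contra hg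
      have hd2 : 2 ≤ Nat.gcd n (p + q) := by
        have h0 : Nat.gcd n (p + q) ≠ 0 := by
          intro h; rw [Nat.gcd_eq_zero_iff] at h; omega
        omega
      obtain ⟨ω, hω1, hωn, hωm⟩ :=
        extra_elem hd2 (Nat.gcd_dvd_left n (p + q)) (Nat.gcd_dvd_right n (p + q)) hne hoa
      have hmem' : -ω ∈ {ζ : ℂ | ζ ^ n = 1 ∧ (ζ ^ (p + q) = -1 ∨ ζ ^ (q - p) = -1)} :=
        ⟨hωn, Or.inl hωm⟩
      rw [hζ₀, Set.mem_singleton_iff, hneg] at hmem'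
      exact hω1 (by linear_combination -hmem')
    · by_contra hg
      have hd2 : 2 ≤ Nat.gcd n (q - p) := by
        have h0 : Nat.gcd n (q - p) ≠ 0 := by
          intro h; rw [Nat.gcd_eq_zero_iff] at h; omega
        omega
      obtain ⟨ω, hω1, hωn, hωm⟩ :=
        extra_elem hd2 (Nat.gcd_dvd_left n (q - p)) (Nat.gcd_dvd_right n (q - p)) hne hob
      have hmem' : -ω ∈ {ζ : ℂ | ζ ^ n = 1 ∧ (ζ ^ (p + q) = -1 ∨ ζ ^ (q - p) = -1)} :=
        ⟨hωn, Or.inr hωm⟩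
      rw [hζ₀, Set.mem_singleton_iff, hneg] at hmem'
      exact hω1 (by linear_combination -hmem')
  · rintro ⟨hne, hpar, hg1, hg2⟩
    have hoa : Odd (p + q) := Nat.odd_iff.mpr (by omega)
    have hob : Odd (q - p) := Nat.odd_iff.mpr (by omega)
    have hSeq : {ζ : ℂ | ζ ^ n = 1 ∧ (ζ ^ (p + q) = -1 ∨ ζ ^ (q - p) = -1)} = {-1} := by
      ext ζ
      simp only [Set.mem_setOf_eq, Set.mem_singleton_iff]
      constructor
      · rintro ⟨h1, h | h⟩
        · exact unique_neg_one hne hoa hg1 h1 h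
        · exact unique_neg_one hne hob hg2 h1 h
      · rintro rfl
        exact ⟨hne.neg_one_pow, Or.inl hoa.neg_one_pow⟩
    rw [hSeq, Set.ncard_singleton]
end

section
/- Let n be even with 8 ∤ n, and let 1 ≤ p < q < n/2 with p + q = n/2. Then for any real sequence (w_j)_{j mod n/2} satisfying w_j + w_{j+(q−p)} = 0 for all j (indices mod n/2), all w_j are zero. -/
lemma key_odd_mul (m d : ℕ) (hm : 0 < m) (h4 : ¬ 4 ∣ m) (hd : 0 < d)
    (hpar : m % 2 = 0 → d % 2 = 0) : ∃ k : ℕ, Odd k ∧ m ∣ k * d := by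
  rcases Nat.even_or_odd m with hme | hmo
  · -- m even, so m = 2*m' with m' odd, d = 2*e
    obtain ⟨m', hm'⟩ := hme
    have hm'odd : m' % 2 = 1 := by omega
    have hde : d % 2 = 0 := hpar (by omega)
    obtain ⟨e, he⟩ : ∃ e, d = 2 * e := ⟨d / 2, by omega⟩
    set g := Nat.gcd e m' with hg
    have hg0 : 0 < g := Nat.gcd_pos_of_pos_right _ (by omega)
    refine ⟨m' / g, ?_, ?_⟩
    · have hdvd : m' / g ∣ m' := Nat.div_dvd_of_dvd (Nat.gcd_dvd_right e m')
      rcases Nat.even_or_odd (m' / g) with hk | hk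
      · exfalso
        have : 2 ∣ m' := dvd_trans hk.two_dvd hdvd
        omega
      · exact hk
    · refine ⟨e / g, ?_⟩
      have h1 : g ∣ e := Nat.gcd_dvd_left e m'
      have h2 : g ∣ m' := Nat.gcd_dvd_right e m'
      calc m' / g * d = m' / g * (2 * e) := by rw [he]
        _ = 2 * (m' / g * e) := by ring
        _ = 2 * (m' / g * (g * (e / g))) := by rw [Nat.mul_div_cancel' h1]
        _ = (2 * (m' / g * g)) * (e / g) := by ring
        _ = 2 * m' * (e / g) := by rw [Nat.div_mul_cancel h2]
        _ = m * (e / g) := by rw [hm']; ring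
  · -- m odd
    set g := Nat.gcd d m with hg
    have hg0 : 0 < g := Nat.gcd_pos_of_pos_right _ hm
    refine ⟨m / g, ?_, ?_⟩
    · have hdvd : m / g ∣ m := Nat.div_dvd_of_dvd (Nat.gcd_dvd_right d m)
      rcases Nat.even_or_odd (m / g) with hk | hk
      · exfalso
        have : 2 ∣ m := dvd_trans hk.two_dvd hdvd
        have : m % 2 = 1 := Nat.odd_iff.mp hmo
        omega
      · exact hk
    · refine ⟨d / g, ?_⟩
      have h1 : g ∣ d := Nat.gcd_dvd_left d m
      have h2 : g ∣ m := Nat.gcd_dvd_right d m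
      calc m / g * d = m / g * (g * (d / g)) := by rw [Nat.mul_div_cancel' h1]
        _ = (m / g * g) * (d / g) := by ring
        _ = m * (d / g) := by rw [Nat.div_mul_cancel h2]

theorem stmt_16 (n p q : ℕ) (hn : 6 ≤ n) (he : 2 ∣ n) (h8 : ¬ 8 ∣ n)
    (hp : 1 ≤ p) (hpq : p < q) (hq : 2 * q < n) (hsum : p + q = n / 2)
    (w : ZMod (n / 2) → ℝ)
    (hw : ∀ j : ZMod (n / 2), w j + w (j + (q - p : ℕ)) = 0) :
    ∀ j : ZMod (n / 2), w j = 0 := by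
  have hm0 : 0 < n / 2 := by omega
  have h4 : ¬ 4 ∣ n / 2 := by
    intro ⟨c, hc⟩
    exact h8 ⟨c, by omega⟩
  have hd0 : 0 < q - p := by omega
  have hpar : (n / 2) % 2 = 0 → (q - p) % 2 = 0 := by omega
  obtain ⟨k, hk, hkd⟩ := key_odd_mul (n / 2) (q - p) hm0 h4 hd0 hpar
  have step : ∀ i : ℕ, ∀ j : ZMod (n / 2), w (j + (i * (q - p) : ℕ)) = (-1 : ℝ) ^ i * w j := by
    intro i
    induction i with
    | zero => intro j; simp
    | succ i ih =>
      intro j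
      have h1 : ((( i + 1) * (q - p) : ℕ) : ZMod (n / 2)) = ((i * (q - p) : ℕ) : ZMod (n / 2)) + ((q - p : ℕ) : ZMod (n / 2)) := by
        push_cast; ring
      rw [h1, ← add_assoc, add_right_comm, ih (j + ((q - p : ℕ) : ZMod (n / 2)))]
      have h3 := hw j
      have h4 : w (j + ((q - p : ℕ) : ZMod (n / 2))) = - w j := by linarith
      rw [h4]; ring
  intro j
  have hz : ((k * (q - p) : ℕ) : ZMod (n / 2)) = 0 := (ZMod.natCast_eq_zero_iff _ _).mpr hkd
  have := step k j
  rw [hz, add_zero, hk.neg_one_pow] at this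
  linarith
end

section
/- Let n ≥ 6 be even with 8 ∤ n and 1 ≤ p < q < n/2 with p + q = n/2. Then the number of n-th roots of unity ζ with ζ^{p+q} = −1 or ζ^{q−p} = −1 equals n/2; i.e., the circulant graph Circ(n,{p,q}) has nullity n/2. -/
/-!
Write `n = 2m`. Every complex `ζ` with `ζ ^ m = -1` lies in the set, and there are `m` of them.
Conversely, if `ζ ^ (2m) = 1` and `ζ ^ (q - p) = -1`, then `ζ ^ m = -1`: the exponents
`q - p = m - 2p` and `m` have the same parity, which together with `4 ∤ m` makes `m` and `q - p`
odd multiples of their gcd `g`, while `ζ ^ (2g) = 1`.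
-/

open Polynomial

theorem pow_mul_of_even_of_pow_two_mul_eq_one {M : Type*} [Monoid M] {x : M} {g b : ℕ}
    (hx : x ^ (2 * g) = 1) (hb : Even b) : x ^ (g * b) = 1 := by
  obtain ⟨k, rfl⟩ := hb
  rw [← two_mul, ← mul_assoc, mul_comm g 2, pow_mul, hx, one_pow]

theorem pow_mul_of_odd_of_pow_two_mul_eq_one {M : Type*} [Monoid M] {x : M} {g b : ℕ}
    (hx : x ^ (2 * g) = 1) (hb : Odd b) : x ^ (g * b) = x ^ g := by
  obtain ⟨k, rfl⟩ := hb
  rw [mul_add, mul_one, pow_add, pow_mul_of_even_of_pow_two_mul_eq_one hx (even_two_mul k),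
    one_mul]

theorem Nat.odd_div_gcd_right_of_not_four_dvd {d m : ℕ} (h4 : ¬ 4 ∣ m)
    (hpar : Even d ↔ Even m) (hd : Odd (d / d.gcd m)) : Odd (m / d.gcd m) := by
  set g := d.gcd m
  by_contra hm
  rw [Nat.not_odd_iff_even] at hm
  have hm_eq : g * (m / g) = m := Nat.mul_div_cancel' (d.gcd_dvd_right m)
  have hd_eq : g * (d / g) = d := Nat.mul_div_cancel' (d.gcd_dvd_left m)
  have hd_even : Even d := hpar.2 (hm_eq ▸ hm.mul_left g)
  have hg : Even g := by
    rw [← hd_eq, Nat.even_mul] at hd_even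
    exact hd_even.resolve_right (Nat.not_even_iff_odd.2 hd)
  exact h4 (hm_eq ▸ Nat.mul_dvd_mul (even_iff_two_dvd.1 hg) (even_iff_two_dvd.1 hm))

theorem pow_eq_neg_one_of_pow_eq_neg_one_of_not_four_dvd {R : Type*} [Ring R] [CharZero R]
    {x : R} {d m : ℕ} (hd : x ^ d = -1) (hm : x ^ (2 * m) = 1) (h4 : ¬ 4 ∣ m)
    (hpar : Even d ↔ Even m) :
    x ^ m = -1 := by
  set g := d.gcd m
  have hg : x ^ (2 * g) = 1 := by
    rw [← Nat.gcd_mul_left]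
    exact pow_gcd_eq_one.2 ⟨by rw [pow_mul', hd, neg_one_sq], hm⟩
  have hd_eq : g * (d / g) = d := Nat.mul_div_cancel' (d.gcd_dvd_left m)
  have hm_eq : g * (m / g) = m := Nat.mul_div_cancel' (d.gcd_dvd_right m)
  have hd_odd : Odd (d / g) := by
    by_contra h
    have := pow_mul_of_even_of_pow_two_mul_eq_one hg (Nat.not_odd_iff_even.1 h)
    rw [hd_eq, hd] at this
    norm_num at this
  have hm_odd := Nat.odd_div_gcd_right_of_not_four_dvd h4 hpar hd_odd
  calc x ^ m = x ^ g := by rw [← hm_eq, pow_mul_of_odd_of_pow_two_mul_eq_one hg hm_odd]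
    _ = x ^ d := by rw [← hd_eq, pow_mul_of_odd_of_pow_two_mul_eq_one hg hd_odd]
    _ = -1 := hd

theorem IsPrimitiveRoot.ncard_setOf_pow_eq {R : Type*} [CommRing R] [IsDomain R] {ζ : R} {m : ℕ}
    (hζ : IsPrimitiveRoot ζ m) (hm : 0 < m) {a : R} (ha : a ≠ 0) (hroot : ∃ α, α ^ m = a) :
    {x : R | x ^ m = a}.ncard = m := by
  classical
  have hset : {x : R | x ^ m = a} = ↑(nthRootsFinset m a) := by
    ext x
    simp [Polynomial.mem_nthRootsFinset hm]
  rw [hset, Set.ncard_coe_finset, nthRootsFinset_def,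
    Multiset.toFinset_card_of_nodup (hζ.nthRoots_nodup ha), hζ.card_nthRoots, if_pos hroot]

theorem stmt_18_general (n p q : ℕ) (he : 2 ∣ n) (h8 : ¬ 8 ∣ n)
    (hpq : p < q) (hsum : p + q = n / 2) :
    {ζ : ℂ | ζ ^ n = 1 ∧ (ζ ^ (p + q) = -1 ∨ ζ ^ (q - p) = -1)}.ncard = n / 2 := by
  obtain ⟨m, rfl⟩ := he
  rw [Nat.mul_div_cancel_left m two_pos] at hsum ⊢
  have hm : 0 < m := by omega
  have h4 : ¬ 4 ∣ m := fun h ↦ h8 (Nat.mul_dvd_mul_left 2 h)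
  have hpar : Even (q - p) ↔ Even m := by
    rw [← hsum, Nat.even_sub hpq.le, Nat.even_add]
    exact Iff.comm
  have hset : {ζ : ℂ | ζ ^ (2 * m) = 1 ∧ (ζ ^ (p + q) = -1 ∨ ζ ^ (q - p) = -1)} =
      {ζ : ℂ | ζ ^ m = -1} := by
    ext ζ
    simp only [Set.mem_ofPred_eq, hsum]
    constructor
    · rintro ⟨h1, h | h⟩
      · exact h
      · exact pow_eq_neg_one_of_pow_eq_neg_one_of_not_four_dvd h h1 h4 hpar
    · intro h
      exact ⟨by rw [pow_mul', h, neg_one_sq], Or.inl h⟩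
  rw [hset, (Complex.isPrimitiveRoot_exp m hm.ne').ncard_setOf_pow_eq hm (by norm_num)
    (IsAlgClosed.exists_pow_nat_eq _ hm)]

theorem stmt_18 (n p q : ℕ) (hn : 6 ≤ n) (he : 2 ∣ n) (h8 : ¬ 8 ∣ n)
    (hp : 1 ≤ p) (hpq : p < q) (hq : 2 * q < n) (hsum : p + q = n / 2) :
    {ζ : ℂ | ζ ^ n = 1 ∧ (ζ ^ (p + q) = -1 ∨ ζ ^ (q - p) = -1)}.ncard = n / 2 :=
  stmt_18_general n p q he h8 hpq hsum
end

section
/- Let n be even and 1 ≤ p < q < n/2. Then the number of n-th roots of unity ζ with ζ^{p+q} = −1 or ζ^{q−p} = −1 is at most n/2 if 8 ∤ n, and at most 3n/4 if 8 ∣ n; moreover when 8 ∣ n the bound 3n/4 is attained exactly when p = n/8 and q = 3n/8. -/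
-- counting lemma
private lemma card_filter_mod (c s r : ℕ) (hr : r < c) :
    ((Finset.range (c * s)).filter (fun k => k % c = r)).card = s := by
  have h : (Finset.range (c * s)).filter (fun k => k % c = r)
      = (Finset.range s).image (fun i => c * i + r) := by
    ext k
    simp only [Finset.mem_filter, Finset.mem_range, Finset.mem_image]
    constructor
    · rintro ⟨hk, hm⟩
      refine ⟨k / c, ?_, ?_⟩
      · by_contra hcon
        push_neg at hcon
        have h1 := Nat.mul_le_mul_left c hcon
        have h2 := Nat.div_add_mod k c
        omega
      · have h2 := Nat.div_add_mod k c
        omega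
    · rintro ⟨i, hi, rfl⟩
      have h1 : c * (i + 1) ≤ c * s := Nat.mul_le_mul_left c hi
      rw [Nat.mul_succ] at h1
      refine ⟨by omega, ?_⟩
      rw [Nat.mul_add_mod]
      exact Nat.mod_eq_of_lt hr
  rw [h, Finset.card_image_of_injective _ ?_, Finset.card_range]
  intro i j hij
  simp only [] at hij
  have : c * i = c * j := by omega
  exact Nat.eq_of_mul_eq_mul_left (by omega) this

private lemma cls_of_val (k j : ℕ) (hk : k ≠ 0) (hj : padicValNat 2 k = j) :
    (j = 0 → k % 2 = 1) ∧ (j = 1 → k % 4 = 2) ∧ (2 ≤ j → k % 4 = 0) := by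
  have hd : (2:ℕ) ^ j ∣ k := hj ▸ pow_padicValNat_dvd
  have hnd : ¬ (2:ℕ) ^ (j + 1) ∣ k := hj ▸ pow_succ_padicValNat_not_dvd hk
  refine ⟨?_, ?_, ?_⟩
  · rintro rfl
    have : ¬ (2:ℕ) ∣ k := by simpa using hnd
    omega
  · rintro rfl
    have h2 : (2:ℕ) ∣ k := by simpa using hd
    have h4 : ¬ (4:ℕ) ∣ k := by
      intro h
      exact hnd (by norm_num; exact_mod_cast h)
    omega
  · intro h2j
    have h4 : (4:ℕ) ∣ k := dvd_trans (by
      have : (2:ℕ) ^ 2 ∣ 2 ^ j := pow_dvd_pow 2 h2j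
      norm_num at this; exact this) hd
    omega

private lemma sol_val (n a k v m : ℕ) (hm : ¬ 2 ∣ m) (hn : n = 2 ^ v * m)
    (hv : 1 ≤ v) (ha : a ≠ 0) (hk : k * a % n = n / 2) :
    k ≠ 0 ∧ padicValNat 2 k + padicValNat 2 a = v - 1 := by
  have hm0 : m ≠ 0 := by rintro rfl; exact hm (dvd_zero 2)
  have hv2 : (2:ℕ) ^ v = 2 * 2 ^ (v - 1) := by
    conv_lhs => rw [show v = 1 + (v - 1) by omega]
    ring
  have hhalf : n / 2 = 2 ^ (v - 1) * m := by
    rw [hn, hv2, Nat.mul_assoc, Nat.mul_div_cancel_left _ (by norm_num)]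
  have hpow0 : (2:ℕ) ^ (v - 1) ≠ 0 := pow_ne_zero _ two_ne_zero
  have hk0 : k ≠ 0 := by
    rintro rfl
    rw [Nat.zero_mul, Nat.zero_mod, hhalf] at hk
    exact Nat.mul_ne_zero hpow0 hm0 hk.symm
  have h1 : k * a = n * (k * a / n) + n / 2 := by
    conv_lhs => rw [← Nat.div_add_mod (k * a) n]
    rw [hk]
  obtain ⟨t, ht⟩ : ∃ t, k * a = n * t + n / 2 := ⟨_, h1⟩
  have hdecomp : k * a = 2 ^ (v - 1) * (2 * m * t + m) := by
    rw [ht, hhalf, hn, hv2]; ring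
  have hodd : ¬ 2 ∣ (2 * m * t + m) := by
    intro h
    have h2 : (2:ℕ) ∣ 2 * m * t := ⟨m * t, by ring⟩
    exact hm ((Nat.dvd_add_right h2).mp h)
  have hc0 : 2 * m * t + m ≠ 0 := by
    intro h
    exact hm0 (Nat.eq_zero_of_add_eq_zero_left h)
  have hval : padicValNat 2 (k * a) = v - 1 := by
    rw [hdecomp, padicValNat.mul hpow0 hc0, padicValNat.prime_pow,
      padicValNat.eq_zero_of_not_dvd hodd, Nat.add_zero]
  refine ⟨hk0, ?_⟩
  rw [← padicValNat.mul hk0 ha, hval]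

private lemma sol_cls (n a k v m : ℕ) (hm : ¬ 2 ∣ m) (hn : n = 2 ^ v * m)
    (hv : 1 ≤ v) (ha : a ≠ 0) (hk : k * a % n = n / 2) :
    (min (v - 1 - padicValNat 2 a) 2 = 0 → k % 2 = 1) ∧
    (min (v - 1 - padicValNat 2 a) 2 = 1 → k % 4 = 2) ∧
    (min (v - 1 - padicValNat 2 a) 2 = 2 → k % 4 = 0) := by
  obtain ⟨hk0, hsum⟩ := sol_val n a k v m hm hn hv ha hk
  obtain ⟨h0, h1, h2⟩ := cls_of_val k (padicValNat 2 k) hk0 rfl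
  refine ⟨fun hc => h0 (by omega), fun hc => h1 (by omega), fun hc => h2 (by omega)⟩

private lemma avoid8 (n a b v m : ℕ) (hm : ¬ 2 ∣ m) (hn : n = 2 ^ v * m) (hv : 3 ≤ v)
    (ha : a ≠ 0) (hb : b ≠ 0) :
    ∃ r, r < 4 ∧ ∀ k, (k * a % n = n / 2 ∨ k * b % n = n / 2) → k % 4 ≠ r := by
  set cA := min (v - 1 - padicValNat 2 a) 2 with hcA
  set cB := min (v - 1 - padicValNat 2 b) 2 with hcB
  refine ⟨if cA = 2 ∨ cB = 2 then (if cA = 0 ∨ cB = 0 then 2 else 1) else 0, by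
    split_ifs <;> norm_num, ?_⟩
  intro k hk
  have hv1 : 1 ≤ v := by omega
  rcases hk with hk | hk
  · obtain ⟨h0, h1, h2⟩ := sol_cls n a k v m hm hn hv1 ha hk
    have hca : cA = 0 ∨ cA = 1 ∨ cA = 2 := by omega
    rcases hca with h | h | h
    · have := h0 h; split_ifs <;> omega
    · have := h1 h; split_ifs <;> omega
    · have := h2 h; split_ifs <;> omega
  · obtain ⟨h0, h1, h2⟩ := sol_cls n b k v m hm hn hv1 hb hk
    have hcb : cB = 0 ∨ cB = 1 ∨ cB = 2 := by omega
    rcases hcb with h | h | h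
    · have := h0 h; split_ifs <;> omega
    · have := h1 h; split_ifs <;> omega
    · have := h2 h; split_ifs <;> omega

private lemma avoid2 (n a b v m : ℕ) (hm : ¬ 2 ∣ m) (hn : n = 2 ^ v * m)
    (hv1 : 1 ≤ v) (hv2 : v ≤ 2) (hab : a % 2 = b % 2) (ha : a ≠ 0) (hb : b ≠ 0) :
    ∃ r, r < 2 ∧ ∀ k, (k * a % n = n / 2 ∨ k * b % n = n / 2) → k % 2 ≠ r := by
  refine ⟨if v = 1 then 0 else (if a % 2 = 1 then 1 else 0), by split_ifs <;> norm_num, ?_⟩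
  have key : ∀ x, x ≠ 0 → x % 2 = a % 2 → ∀ k', k' * x % n = n / 2 →
      k' % 2 ≠ if v = 1 then 0 else (if a % 2 = 1 then 1 else 0) := by
    intro x hx hxa k' hk'
    obtain ⟨hk0, hsum⟩ := sol_val n x k' v m hm hn hv1 hx hk'
    have hkodd : padicValNat 2 k' = 0 → k' % 2 = 1 :=
      fun h => (cls_of_val k' 0 hk0 h).1 rfl
    have hkeven : 1 ≤ padicValNat 2 k' → k' % 2 = 0 := by
      intro h
      have h21 : (2:ℕ) ^ 1 ∣ k' := dvd_trans (pow_dvd_pow 2 h) pow_padicValNat_dvd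
      have : (2:ℕ) ∣ k' := by simpa using h21
      omega
    have hxodd : x % 2 = 1 → padicValNat 2 x = 0 :=
      fun h => padicValNat.eq_zero_of_not_dvd (by omega)
    have hxeven : x % 2 = 0 → 1 ≤ padicValNat 2 x := by
      intro h
      by_contra hc
      have hz : padicValNat 2 x = 0 := by omega
      have := pow_succ_padicValNat_not_dvd (p := 2) hx
      rw [hz] at this
      simp at this
      omega
    by_cases h1 : v = 1
    · rw [if_pos h1]
      have := hkodd (by omega)
      omega
    · rw [if_neg h1]
      have hv' : v = 2 := by omega
      by_cases h2 : a % 2 = 1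
      · rw [if_pos h2]
        have hvx := hxodd (by omega)
        have := hkeven (by omega)
        omega
      · rw [if_neg h2]
        have hvx := hxeven (by omega)
        have := hkodd (by omega)
        omega
  rintro k (hk | hk)
  exacts [key a ha rfl k hk, key b hb hab.symm k hk]


theorem stmt_19 (n p q : ℕ) (hn : 6 ≤ n) (he : 2 ∣ n)
    (hp : 1 ≤ p) (hpq : p < q) (hq : 2 * q < n) :
    let N := {ζ : ℂ | ζ ^ n = 1 ∧ (ζ ^ (p + q) = -1 ∨ ζ ^ (q - p) = -1)}.ncard
    (¬ 8 ∣ n → N ≤ n / 2) ∧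
    (8 ∣ n → N ≤ 3 * n / 4 ∧ (N = 3 * n / 4 ↔ p = n / 8 ∧ q = 3 * n / 8)) := by
  intro N
  have hn0 : n ≠ 0 := by omega
  have : NeZero n := ⟨hn0⟩
  have ha1 : p + q ≠ 0 := by omega
  have hb1 : q - p ≠ 0 := by omega
  have han : p + q < n := by omega
  have hbn : q - p < n := by omega
  obtain ⟨ω, hprim⟩ : ∃ ω : ℂ, IsPrimitiveRoot ω n := ⟨_, Complex.isPrimitiveRoot_exp n hn0⟩
  have hneg : ω ^ (n / 2) = -1 := by
    have hsq : (ω ^ (n / 2)) ^ 2 = 1 := by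
      rw [← pow_mul, show n / 2 * 2 = n by omega]
      exact hprim.pow_eq_one
    have hne : ω ^ (n / 2) ≠ 1 := hprim.pow_ne_one_of_pos_of_lt (by omega) (by omega)
    have hfac : (ω ^ (n / 2) - 1) * (ω ^ (n / 2) + 1) = 0 := by linear_combination hsq
    rcases mul_eq_zero.mp hfac with h | h
    · exact absurd (by linear_combination h) hne
    · linear_combination h
  have hdvd : ∀ x : ℕ, (n ∣ x + n / 2) ↔ x % n = n / 2 := by
    intro x
    constructor
    · rintro ⟨s, hs⟩
      match s, hs with
      | 0, hs => omega
      | (t+1), hs =>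
        have h2 : x = n * t + n / 2 := by
          have : n * (t + 1) = n * t + n := by ring
          omega
        rw [h2, Nat.mul_add_mod]
        exact Nat.mod_eq_of_lt (by omega)
    · intro hx
      refine ⟨x / n + 1, ?_⟩
      have h1 : x = n * (x / n) + n / 2 := by
        conv_lhs => rw [← Nat.div_add_mod x n]
        rw [hx]
      calc x + n / 2 = n * (x / n) + (n / 2 + n / 2) := by omega
        _ = n * (x / n) + n := by omega
        _ = n * (x / n + 1) := by ring
  have hiff : ∀ x k : ℕ, ((ω ^ k) ^ x = -1 ↔ k * x % n = n / 2) := by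
    intro x k
    rw [← pow_mul, ← hdvd]
    constructor
    · intro h
      have h1 : ω ^ (k * x + n / 2) = 1 := by
        rw [pow_add, h, hneg]; ring
      exact (hprim.pow_eq_one_iff_dvd _).mp h1
    · intro h
      have h1 : ω ^ (k * x + n / 2) = 1 := (hprim.pow_eq_one_iff_dvd _).mpr h
      rw [pow_add, hneg] at h1
      linear_combination -h1
  classical
  set F : Finset ℕ := (Finset.range n).filter
    (fun k => k * (p + q) % n = n / 2 ∨ k * (q - p) % n = n / 2) with hF
  have hN : N = F.card := by
    have himg : {ζ : ℂ | ζ ^ n = 1 ∧ (ζ ^ (p + q) = -1 ∨ ζ ^ (q - p) = -1)}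
        = ↑(F.image fun k => ω ^ k) := by
      ext ζ
      simp only [Set.mem_setOf_eq, Finset.coe_image, Set.mem_image, Finset.mem_coe,
        Finset.mem_filter, Finset.mem_range, hF]
      constructor
      · rintro ⟨h1, h2⟩
        obtain ⟨i, hi, rfl⟩ := hprim.eq_pow_of_pow_eq_one h1
        refine ⟨i, ⟨hi, ?_⟩, rfl⟩
        rwa [hiff (p + q) i, hiff (q - p) i] at h2
      · rintro ⟨i, ⟨hi, h2⟩, rfl⟩
        refine ⟨?_, ?_⟩
        · rw [← pow_mul, mul_comm, pow_mul, hprim.pow_eq_one, one_pow]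
        · rwa [hiff (p + q) i, hiff (q - p) i]
    show {ζ : ℂ | ζ ^ n = 1 ∧ (ζ ^ (p + q) = -1 ∨ ζ ^ (q - p) = -1)}.ncard = F.card
    rw [himg, Set.ncard_coe_finset]
    apply Finset.card_image_of_injOn
    intro i hi j hj hij
    simp only [hF, Finset.mem_coe, Finset.mem_filter, Finset.mem_range] at hi hj
    exact hprim.pow_inj hi.1 hj.1 hij
  constructor
  · intro h8
    obtain ⟨v, m, hm, hnvm⟩ := Nat.exists_eq_pow_mul_and_not_dvd hn0 2 (by norm_num)
    have hv1 : 1 ≤ v := by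
      rcases Nat.eq_zero_or_pos v with h | h
      · subst h; rw [pow_zero, one_mul] at hnvm; exact absurd (hnvm ▸ he) hm
      · exact h
    have hv2 : v ≤ 2 := by
      by_contra h
      push_neg at h
      apply h8
      have h83 : (8:ℕ) ∣ 2 ^ v := by
        have h3 := pow_dvd_pow 2 (show 3 ≤ v by omega)
        norm_num at h3; exact h3
      exact hnvm ▸ h83.mul_right m
    obtain ⟨r, hr2, havoid⟩ :=
      avoid2 n (p + q) (q - p) v m hm hnvm hv1 hv2 (by omega) ha1 hb1
    have hsub : F ⊆ (Finset.range n).filter (fun k => ¬ k % 2 = r) := by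
      intro k hk
      simp only [hF, Finset.mem_filter, Finset.mem_range] at hk ⊢
      exact ⟨hk.1, havoid k hk.2⟩
    have hcards := Finset.card_filter_add_card_filter_not
      (s := Finset.range n) (fun k => k % 2 = r)
    rw [Finset.card_range] at hcards
    have hceq : ((Finset.range n).filter (fun k => k % 2 = r)).card = n / 2 := by
      have h1 := card_filter_mod 2 (n / 2) r hr2
      rw [show 2 * (n / 2) = n by omega] at h1
      exact h1
    have := Finset.card_le_card hsub
    omega
  · intro h8
    obtain ⟨v, m, hm, hnvm⟩ := Nat.exists_eq_pow_mul_and_not_dvd hn0 2 (by norm_num)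
    have hv3 : 3 ≤ v := by
      by_contra h
      push_neg at h
      interval_cases v <;> rw [hnvm] at h8 <;> norm_num at h8 <;> omega
    obtain ⟨r, hr4, havoid⟩ := avoid8 n (p + q) (q - p) v m hm hnvm hv3 ha1 hb1
    have hsub : F ⊆ (Finset.range n).filter (fun k => ¬ k % 4 = r) := by
      intro k hk
      simp only [hF, Finset.mem_filter, Finset.mem_range] at hk ⊢
      exact ⟨hk.1, havoid k hk.2⟩
    have hcards := Finset.card_filter_add_card_filter_not
      (s := Finset.range n) (fun k => k % 4 = r)
    rw [Finset.card_range] at hcards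
    have hceq : ((Finset.range n).filter (fun k => k % 4 = r)).card = n / 4 := by
      have h1 := card_filter_mod 4 (n / 4) r hr4
      rw [show 4 * (n / 4) = n by omega] at h1
      exact h1
    have hle' := Finset.card_le_card hsub
    have hle : N ≤ 3 * n / 4 := by omega
    refine ⟨hle, ?_, ?_⟩
    · intro hEq
      have hFeq : F = (Finset.range n).filter (fun k => ¬ k % 4 = r) := by
        apply Finset.eq_of_subset_of_card_le hsub
        omega
      have h0F : (0:ℕ) ∉ F := by
        simp only [hF, Finset.mem_filter, Finset.mem_range]
        rintro ⟨-, h | h⟩ <;> rw [Nat.zero_mul, Nat.zero_mod] at h <;> omega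
      have hr0 : r = 0 := by
        by_contra hr
        apply h0F
        rw [hFeq]
        simp only [Finset.mem_filter, Finset.mem_range]
        omega
      subst hr0
      have h1F : (1:ℕ) ∈ F := by
        rw [hFeq]; simp only [Finset.mem_filter, Finset.mem_range]; omega
      have h2F : (2:ℕ) ∈ F := by
        rw [hFeq]; simp only [Finset.mem_filter, Finset.mem_range]; omega
      simp only [hF, Finset.mem_filter, Finset.mem_range, Nat.one_mul] at h1F h2F
      have haeq : p + q = n / 2 := by
        rcases h1F.2 with h | h
        · rwa [Nat.mod_eq_of_lt han] at h
        · rw [Nat.mod_eq_of_lt hbn] at h; omega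
      have hbeq : 2 * (q - p) = n / 2 := by
        rcases h2F.2 with h | h
        · rw [show 2 * (p + q) = n by omega, Nat.mod_self] at h; omega
        · rwa [Nat.mod_eq_of_lt (by omega)] at h
      constructor <;> omega
    · rintro ⟨hp8, hq8⟩
      obtain ⟨t, rfl⟩ := h8
      have ht1 : 1 ≤ t := by omega
      have e1 : p + q = 4 * t := by omega
      have e2 : q - p = 2 * t := by omega
      have hFeq : F = (Finset.range (8 * t)).filter (fun k => ¬ k % 4 = 0) := by
        ext k
        simp only [hF, Finset.mem_filter, Finset.mem_range]
        refine and_congr_right fun hk => ?_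
        rw [e1, e2]
        have m1 : k * (4 * t) % (8 * t) = k % 2 * (4 * t) := by
          rw [show 8 * t = 2 * (4 * t) by ring]
          exact Nat.mul_mod_mul_right (4 * t) k 2
        have m2 : k * (2 * t) % (8 * t) = k % 4 * (2 * t) := by
          rw [show 8 * t = 4 * (2 * t) by ring]
          exact Nat.mul_mod_mul_right (2 * t) k 4
        rw [m1, m2, show 8 * t / 2 = 4 * t by omega]
        constructor
        · rintro (h | h)
          · have h2 : k % 2 = 1 := by
              have hh : k % 2 = 0 ∨ k % 2 = 1 := by omega
              rcases hh with h' | h'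
              · rw [h'] at h; omega
              · exact h'
            omega
          · have hh : k % 4 = 0 ∨ k % 4 = 1 ∨ k % 4 = 2 ∨ k % 4 = 3 := by omega
            rcases hh with h' | h' | h' | h' <;> rw [h'] at h <;> omega
        · intro hne
          have hh : k % 4 = 1 ∨ k % 4 = 2 ∨ k % 4 = 3 := by omega
          rcases hh with h' | h' | h'
          · left; rw [show k % 2 = 1 by omega]; omega
          · right; rw [h']; omega
          · left; rw [show k % 2 = 1 by omega]; omega
      have hcards2 := Finset.card_filter_add_card_filter_not
        (s := Finset.range (8 * t)) (fun k => k % 4 = 0)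
      rw [Finset.card_range] at hcards2
      have h1 := card_filter_mod 4 (2 * t) 0 (by norm_num)
      rw [show 4 * (2 * t) = 8 * t by ring] at h1
      have hcardF : F.card = 8 * t - 2 * t := by
        rw [hFeq]; omega
      omega
end
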